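/- Merging adjacent components preserves homotopy: if nanophrases P₁ = (w₁|...|w_k) and P₂ = (v₁|...|v_k) of length k over α are homotopic, then for every l ∈ {1,...,k−1} the nanophrases (w₁|...|w_l w_{l+1}|...|w_k) and (v₁|...|v_l v_{l+1}|...|v_k) of length k−1 are homotopic. -/

import Mathlib

/-! Nanophrases over a set `α` (with involution `τ`) in the sense of Turaev,
with letters drawn from a type `L`.  A phrase is encoded as a single list with
`none` acting as the separator `|` between components; thus the homotopy moves
may modify subwords spanning several components. -/

/-- A nanophrase over `α` with letters in `L`: a projection `L → α` and a word
with separators (`none`) dividing the components. -/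
structure NPhrase (α : Type*) (L : Type*) where
  proj : L → α
  word : List (Option L)

namespace NPhrase

/-- The components of a separator-encoded phrase word. -/
def comps {L : Type*} : List (Option L) → List (List L)
  | [] => [[]]
  | none :: l => [] :: comps l
  | some a :: l =>
      match comps l with
      | [] => [[a]]
      | c :: cs => (a :: c) :: cs

/-- Re-encode a list of components as a separator-encoded phrase word. -/
def ofComps {L : Type*} (cs : List (List L)) : List (Option L) :=
  List.intercalate [none] (cs.map (fun c => c.map some))

/-- The letters of a phrase word (separators removed). -/
def letters {L : Type*} (w : List (Option L)) : List L := w.filterMap id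

/-- The Gauss condition: every letter occurs exactly twice or not at all. -/
def IsGauss {α L : Type*} [DecidableEq L] (P : NPhrase α L) : Prop :=
  ∀ x : L, (letters P.word).count x = 0 ∨ (letters P.word).count x = 2

/-- A list consisting only of separators. -/
def Seps {L : Type*} (s : List (Option L)) : Prop := ∀ x ∈ s, x = none

/-- Isomorphism of nanophrases: a bijective relabelling of the letters which
preserves the projections on the letters actually occurring. -/
def Isomorphic {α L : Type*} (P Q : NPhrase α L) : Prop :=
  ∃ e : L ≃ L, (∀ x ∈ letters P.word, Q.proj (e x) = P.proj x) ∧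
    Q.word = P.word.map (Option.map e)

/-- One elementary step of homotopy of nanophrases: an isomorphism or one of the
three homotopy moves (the modified subwords may span several components, i.e.
separators may occur between the displayed consecutive letters). -/
inductive Step {α L : Type*} (τ : α → α) : NPhrase α L → NPhrase α L → Prop
  | iso (g g' : L → α) (w : List (Option L)) (e : L ≃ L)
      (hg : ∀ x ∈ letters w, g' (e x) = g x) :
      Step τ ⟨g, w⟩ ⟨g', w.map (Option.map e)⟩
  | move1 (g : L → α) (A : L) (x s y : List (Option L)) (hs : Seps s) :
      Step τ ⟨g, x ++ [some A] ++ s ++ [some A] ++ y⟩ ⟨g, x ++ s ++ y⟩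
  | move2 (g : L → α) (A B : L) (x s₁ y s₂ z : List (Option L))
      (hs₁ : Seps s₁) (hs₂ : Seps s₂) (hAB : g B = τ (g A)) :
      Step τ ⟨g, x ++ [some A] ++ s₁ ++ [some B] ++ y ++ [some B] ++ s₂ ++ [some A] ++ z⟩
             ⟨g, x ++ s₁ ++ y ++ s₂ ++ z⟩
  | move3 (g : L → α) (A B C : L) (x s₁ y s₂ z s₃ t : List (Option L))
      (hs₁ : Seps s₁) (hs₂ : Seps s₂) (hs₃ : Seps s₃)
      (hAB : g A = g B) (hBC : g B = g C) :
      Step τ ⟨g, x ++ [some A] ++ s₁ ++ [some B] ++ y ++ [some A] ++ s₂ ++ [some C] ++ z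
                  ++ [some B] ++ s₃ ++ [some C] ++ t⟩
             ⟨g, x ++ [some B] ++ s₁ ++ [some A] ++ y ++ [some C] ++ s₂ ++ [some A] ++ z
                  ++ [some C] ++ s₃ ++ [some B] ++ t⟩

/-- Homotopy of nanophrases (with the diagonal homotopy data): the equivalence
relation generated by isomorphisms and the three homotopy moves. -/
def Homotopic {α L : Type*} (τ : α → α) : NPhrase α L → NPhrase α L → Prop :=
  Relation.EqvGen (Step τ)

/-- Relations for the group `Π = ⟨ z_a (a ∈ α) ∣ z_a z_{τ(a)} = 1 ⟩`. -/
def gRels {α : Type*} (τ : α → α) : Set (FreeGroup α) :=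
  {r | ∃ a : α, r = FreeGroup.of a * FreeGroup.of (τ a)}

/-- Relations for the abelian group `π = ⟨ a ∈ α ∣ a·τ(a) = 1, ab = ba ⟩`. -/
def piRels {α : Type*} (τ : α → α) : Set (FreeGroup α) :=
  {r | (∃ a : α, r = FreeGroup.of a * FreeGroup.of (τ a)) ∨
    ∃ a b : α, r = FreeGroup.of a * FreeGroup.of b * (FreeGroup.of a)⁻¹ * (FreeGroup.of b)⁻¹}

/-- The value of `γ` on one component (a word), given the list `pre` of letters
of the phrase read before it: the ordered product of `z_{|X|}` at a first
occurrence and `z_{τ(|X|)}` at a second occurrence. -/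
def gammaWord {α L : Type*} [DecidableEq L] (τ : α → α) (g : L → α) :
    List L → List L → PresentedGroup (gRels τ)
  | _, [] => 1
  | pre, n :: l =>
      (if n ∈ pre then PresentedGroup.of (τ (g n)) else PresentedGroup.of (g n)) *
        gammaWord τ g (pre ++ [n]) l

/-- The `i`-th coordinate (0-indexed) of the invariant `γ` of a nanophrase. -/
def gammaCoord {α L : Type*} [DecidableEq L] (τ : α → α) (P : NPhrase α L) (i : ℕ) :
    PresentedGroup (gRels τ) :=
  gammaWord τ P.proj (((comps P.word).take i).flatten) ((comps P.word).getD i [])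

/-- The pairing `(w_i, w_j)_P ∈ π`: the product of `|X|` over the letters `X`
occurring both in the `i`-th and in the `j`-th component (0-indexed). -/
def pairing {α L : Type*} [DecidableEq L] (τ : α → α) (P : NPhrase α L) (i j : ℕ) :
    PresentedGroup (piRels τ) :=
  ((((comps P.word).getD i []).filter (fun x => x ∈ (comps P.word).getD j [])).map
    (fun x => PresentedGroup.of (P.proj x))).prod

/-- Merge the `l`-th and `(l+1)`-st components of a list of components. -/
def mergeAt {L : Type*} (l : ℕ) (cs : List (List L)) : List (List L) :=
  cs.take l ++ [cs.getD l [] ++ cs.getD (l + 1) []] ++ cs.drop (l + 2)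

/-- The nanophrase `P_a^{1,1;p,q}` of length `k` (0-indexed components): the
letter `0` with `|0| = a` in components `p` and `q`, all other components empty. -/
def stdPair {α : Type*} (k p q : ℕ) (a : α) : NPhrase α ℕ :=
  ⟨fun _ => a, ofComps ((List.range k).map fun i => if i = p ∨ i = q then [0] else [])⟩

/-- The nanoword `w_{a,b} = ABAB` with `|A| = a`, `|B| = b`, viewed as a
nanophrase of length 1. -/
def wab {α : Type*} (a b : α) : NPhrase α ℕ :=
  ⟨fun n => if n = 0 then a else b, [some 0, some 1, some 0, some 1]⟩

/-- The desingularization of an étale word `w`: each letter `A` of multiplicity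
`m` is replaced, at its `i`-th occurrence (1-indexed), by
`A_{1,i} A_{2,i} ⋯ A_{i-1,i} A_{i,i+1} ⋯ A_{i,m}`, where `A_{i,j}` is encoded
as `(A, i, j)`; letters of multiplicity 1 disappear. -/
def desing {L : Type*} [DecidableEq L] (w : List L) : List (L × ℕ × ℕ) :=
  (w.zipIdx.map Prod.swap).flatMap fun pA =>
    let A := pA.2
    let i := (w.take (pA.1 + 1)).count A
    let m := w.count A
    ((List.range (i - 1)).map fun t => (A, t + 1, i)) ++
      ((List.range (m - i)).map fun t => (A, i, i + 1 + t))

/-- Two étale words over `α` are homotopic if their desingularizations are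
homotopic nanowords (nanophrases of length 1). -/
def EtaleHomotopic {α L : Type*} [DecidableEq L] (τ : α → α)
    (g₁ : L → α) (w₁ : List L) (g₂ : L → α) (w₂ : List L) : Prop :=
  Homotopic τ (⟨fun t => g₁ t.1, (desing w₁).map some⟩ : NPhrase α (L × ℕ × ℕ))
    ⟨fun t => g₂ t.1, (desing w₂).map some⟩


/-!
Merging components `l` and `l + 1` of a phrase word amounts to deleting its `l`-th separator.
Deleting a separator turns an isomorphism into an isomorphism and a move into a move of the
same kind: the moves allow arbitrary blocks of separators between the displayed letters, and
the deleted separator lies in exactly one block. Hence it preserves homotopy.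
-/

section EraseSep

variable {L : Type*}

def sepCount (w : List (Option L)) : ℕ := w.countP Option.isNone

@[simp] lemma sepCount_nil : sepCount ([] : List (Option L)) = 0 := rfl

@[simp] lemma sepCount_some_cons (a : L) (t : List (Option L)) :
    sepCount (some a :: t) = sepCount t := by
  simp [sepCount]

@[simp] lemma sepCount_none_cons (t : List (Option L)) :
    sepCount (none :: t) = sepCount t + 1 := by
  simp [sepCount]

@[simp] lemma sepCount_append (x y : List (Option L)) :
    sepCount (x ++ y) = sepCount x + sepCount y :=
  List.countP_append

/-- `eraseSep n w` deletes the `n`-th separator (0-indexed) of `w`. -/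
def eraseSep : ℕ → List (Option L) → List (Option L)
  | _, [] => []
  | n, some a :: t => some a :: eraseSep n t
  | 0, none :: t => t
  | n + 1, none :: t => none :: eraseSep n t

@[simp] lemma eraseSep_nil (n : ℕ) : eraseSep n ([] : List (Option L)) = [] := by
  cases n <;> rfl

@[simp] lemma eraseSep_some_cons (n : ℕ) (a : L) (t : List (Option L)) :
    eraseSep n (some a :: t) = some a :: eraseSep n t := by
  cases n <;> rfl

@[simp] lemma eraseSep_zero_none_cons (t : List (Option L)) : eraseSep 0 (none :: t) = t := rfl

@[simp] lemma eraseSep_succ_none_cons (n : ℕ) (t : List (Option L)) :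
    eraseSep (n + 1) (none :: t) = none :: eraseSep n t := rfl

lemma eraseSep_append (n : ℕ) (x y : List (Option L)) :
    eraseSep n (x ++ y) =
      if n < sepCount x then eraseSep n x ++ y else x ++ eraseSep (n - sepCount x) y := by
  induction x generalizing n with
  | nil => simp
  | cons o t ih =>
    match o, n with
    | some a, n =>
      simp only [List.cons_append, eraseSep_some_cons, ih, sepCount_some_cons]
      split_ifs <;> rfl
    | none, 0 => simp
    | none, n + 1 =>
      simp only [List.cons_append, eraseSep_succ_none_cons, ih, sepCount_none_cons]
      split_ifs <;> first | omega | simp [show n + 1 - (sepCount t + 1) = n - sepCount t by omega]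

lemma eraseSep_map_some_append (n : ℕ) (c : List L) (w : List (Option L)) :
    eraseSep n (c.map some ++ w) = c.map some ++ eraseSep n w := by
  induction c with
  | nil => rfl
  | cons a c ih => simp [ih]

lemma eraseSep_sublist (n : ℕ) (w : List (Option L)) : (eraseSep n w).Sublist w := by
  induction w generalizing n with
  | nil => simp
  | cons o t ih =>
    match o, n with
    | some a, n => simpa using (ih n).cons_cons (some a)
    | none, 0 => exact List.sublist_cons_self _ _
    | none, n + 1 => exact (ih n).cons_cons none

lemma Seps.eraseSep {s : List (Option L)} (hs : Seps s) (n : ℕ) : Seps (eraseSep n s) :=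
  fun x hx => hs x ((eraseSep_sublist n s).subset hx)

lemma eraseSep_map {L' : Type*} (e : L → L') (n : ℕ) (w : List (Option L)) :
    eraseSep n (w.map (Option.map e)) = (eraseSep n w).map (Option.map e) := by
  induction w generalizing n with
  | nil => simp
  | cons o t ih =>
    match o, n with
    | some a, n => simp [ih]
    | none, 0 => simp
    | none, n + 1 => simp [ih]

lemma Step.eraseSep {α : Type*} {τ : α → α} {P Q : NPhrase α L} (h : Step τ P Q) (n : ℕ) :
    Step τ ⟨P.proj, eraseSep n P.word⟩ ⟨Q.proj, eraseSep n Q.word⟩ := by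
  cases h with
  | iso g g' w e hg =>
    refine eraseSep_map e n w ▸ Step.iso g g' _ e fun x hx => hg x ?_
    exact ((eraseSep_sublist n w).filterMap id).subset hx
  | move1 g A x s y hs =>
    simp only [eraseSep_append, sepCount_append, sepCount_some_cons, sepCount_nil, add_zero,
      eraseSep_some_cons, eraseSep_nil]
    split_ifs
    · exact Step.move1 g A _ s y hs
    · exact Step.move1 g A x _ y (hs.eraseSep _)
    · exact Step.move1 g A x s _ hs
  | move2 g A B x s₁ y s₂ z hs₁ hs₂ hAB =>
    simp only [eraseSep_append, sepCount_append, sepCount_some_cons, sepCount_nil, add_zero,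
      eraseSep_some_cons, eraseSep_nil]
    split_ifs
    · exact Step.move2 g A B _ s₁ y s₂ z hs₁ hs₂ hAB
    · exact Step.move2 g A B x _ y s₂ z (hs₁.eraseSep _) hs₂ hAB
    · exact Step.move2 g A B x s₁ _ s₂ z hs₁ hs₂ hAB
    · exact Step.move2 g A B x s₁ y _ z hs₁ (hs₂.eraseSep _) hAB
    · exact Step.move2 g A B x s₁ y s₂ _ hs₁ hs₂ hAB
  | move3 g A B C x s₁ y s₂ z s₃ t hs₁ hs₂ hs₃ hAB hBC =>
    simp only [eraseSep_append, sepCount_append, sepCount_some_cons, sepCount_nil, add_zero,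
      eraseSep_some_cons, eraseSep_nil]
    split_ifs
    · exact Step.move3 g A B C _ s₁ y s₂ z s₃ t hs₁ hs₂ hs₃ hAB hBC
    · exact Step.move3 g A B C x _ y s₂ z s₃ t (hs₁.eraseSep _) hs₂ hs₃ hAB hBC
    · exact Step.move3 g A B C x s₁ _ s₂ z s₃ t hs₁ hs₂ hs₃ hAB hBC
    · exact Step.move3 g A B C x s₁ y _ z s₃ t hs₁ (hs₂.eraseSep _) hs₃ hAB hBC
    · exact Step.move3 g A B C x s₁ y s₂ _ s₃ t hs₁ hs₂ hs₃ hAB hBC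
    · exact Step.move3 g A B C x s₁ y s₂ z _ t hs₁ hs₂ (hs₃.eraseSep _) hAB hBC
    · exact Step.move3 g A B C x s₁ y s₂ z s₃ _ hs₁ hs₂ hs₃ hAB hBC

lemma Homotopic.eraseSep {α : Type*} {τ : α → α} {P Q : NPhrase α L}
    (h : Homotopic τ P Q) (n : ℕ) :
    Homotopic τ ⟨P.proj, eraseSep n P.word⟩ ⟨Q.proj, eraseSep n Q.word⟩ := by
  induction h with
  | rel _ _ hPQ => exact .rel _ _ (hPQ.eraseSep n)
  | refl _ => exact .refl _
  | symm _ _ _ ih => exact .symm _ _ ih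
  | trans _ _ _ _ _ ih₁ ih₂ => exact .trans _ _ _ ih₁ ih₂

end EraseSep

section Components

variable {L : Type*}

lemma comps_ne_nil (w : List (Option L)) : comps w ≠ [] := by
  induction w with
  | nil => simp [comps]
  | cons o t ih =>
    cases o with
    | none => simp [comps]
    | some a =>
      obtain ⟨c, cs, hc⟩ := List.exists_cons_of_ne_nil ih
      simp [comps, hc]

lemma ofComps_singleton (c : List L) : ofComps [c] = c.map some := by
  simp [ofComps]

lemma ofComps_cons_of_ne_nil (c : List L) {cs : List (List L)} (h : cs ≠ []) :
    ofComps (c :: cs) = c.map some ++ none :: ofComps cs := by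
  obtain ⟨d, ds, rfl⟩ := List.exists_cons_of_ne_nil h
  simp [ofComps, List.intercalate]

lemma ofComps_append_cons (c d : List L) (cs : List (List L)) :
    ofComps ((c ++ d) :: cs) = c.map some ++ ofComps (d :: cs) := by
  cases cs with
  | nil => simp [ofComps_singleton]
  | cons e es => simp [ofComps_cons_of_ne_nil]

lemma ofComps_comps (w : List (Option L)) : ofComps (comps w) = w := by
  induction w with
  | nil => simp [comps, ofComps_singleton]
  | cons o t ih =>
    obtain ⟨c, cs, hc⟩ := List.exists_cons_of_ne_nil (comps_ne_nil t)
    cases o with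
    | none =>
      rw [show comps (none :: t) = [] :: comps t from rfl,
        ofComps_cons_of_ne_nil _ (comps_ne_nil t), ih]
      rfl
    | some a =>
      have hw : comps (some a :: t) = ([a] ++ c) :: cs := by simp [comps, hc]
      rw [hw, ofComps_append_cons, ← hc, ih]
      rfl

lemma mergeAt_ne_nil (l : ℕ) (cs : List (List L)) : mergeAt l cs ≠ [] := by
  simp [mergeAt]

lemma ofComps_mergeAt (l : ℕ) (cs : List (List L)) (h : l + 1 < cs.length) :
    ofComps (mergeAt l cs) = eraseSep l (ofComps cs) := by
  induction cs generalizing l with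
  | nil => simp at h
  | cons c cs ih =>
    have hcs : cs ≠ [] := List.ne_nil_of_length_pos (by simp at h; omega)
    rw [ofComps_cons_of_ne_nil c hcs, eraseSep_map_some_append]
    cases l with
    | zero =>
      obtain ⟨d, ds, rfl⟩ := List.exists_cons_of_ne_nil hcs
      simp [mergeAt, ofComps_append_cons]
    | succ l =>
      have hl : l + 1 < cs.length := by simp at h; omega
      rw [show mergeAt (l + 1) (c :: cs) = c :: mergeAt l cs by simp [mergeAt],
        ofComps_cons_of_ne_nil c (mergeAt_ne_nil l cs), ih l hl]
      rfl

end Components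

end NPhrase

open NPhrase in
theorem merge_preserves_homotopy_general {α : Type*} (τ : α → α)
    (P₁ P₂ : NPhrase α ℕ)
    (k : ℕ)
    (hk₁ : (comps P₁.word).length = k) (hk₂ : (comps P₂.word).length = k)
    (h : Homotopic τ P₁ P₂) (l : ℕ) (hl : l + 1 < k) :
    Homotopic τ (⟨P₁.proj, ofComps (mergeAt l (comps P₁.word))⟩ : NPhrase α ℕ)
      ⟨P₂.proj, ofComps (mergeAt l (comps P₂.word))⟩ := by
  rw [ofComps_mergeAt l _ (hk₁ ▸ hl), ofComps_mergeAt l _ (hk₂ ▸ hl), ofComps_comps,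
    ofComps_comps]
  exact h.eraseSep l

open NPhrase in
/-- merging the `l`-th and `(l+1)`-st components preserves
homotopy of nanophrases. -/
theorem merge_preserves_homotopy {α : Type*} [Fintype α] (τ : α → α)
    (hτ : Function.Involutive τ) (P₁ P₂ : NPhrase α ℕ)
    (hG₁ : P₁.IsGauss) (hG₂ : P₂.IsGauss) (k : ℕ)
    (hk₁ : (comps P₁.word).length = k) (hk₂ : (comps P₂.word).length = k)
    (h : Homotopic τ P₁ P₂) (l : ℕ) (hl : l + 1 < k) :
    Homotopic τ (⟨P₁.proj, ofComps (mergeAt l (comps P₁.word))⟩ : NPhrase α ℕ)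
      ⟨P₂.proj, ofComps (mergeAt l (comps P₂.word))⟩ :=
  merge_preserves_homotopy_general τ P₁ P₂ k hk₁ hk₂ h l hl
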